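/- arXiv:1811.09859 — 2 statements merged into one kernel-verified Lean document; each statement's English description precedes it below -/
import Mathlib

section
/- Let V be a finite-dimensional complex vector space, let A, B, C be linear endomorphisms of V, let r be a natural number and v₁, …, v_r ∈ V, and let θ₁, θ₂ be real numbers with θ₁ > θ₂. Then the framed representation M̃ = (V, A, B, C, v₁, …, v_r) is θ-stable if and only if v₁, …, v_r jointly generate V (i.e. the only ℂ-subspace W ⊆ V with A(W) ⊆ W, B(W) ⊆ W, C(W) ⊆ W and vᵢ ∈ W for all i is W = V). -/
/-!
Framed representations of the 3-loop quiver with `r` framings and dimension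
vector `(1, dim V)`: a tuple `(V, A, B, C, v₁, …, v_r)` with `A B C : V →ₗ[ℂ] V`
and `v i ∈ V`.  A framed subrepresentation is a pair `(ε, W)` with `ε ∈ {0, 1}`
and `W ⊆ V` an `A, B, C`-invariant subspace containing all `v i` when `ε = 1`.
Its slope is `μ(ε, W) = (ε·θ₁ + θ₂·dim W)/(ε + dim W)`.
-/

/-- The slope `μ(ε, W) = (ε·θ₁ + θ₂·dim W)/(ε + dim W)` of a framed
subrepresentation. -/
noncomputable def framedSlope {V : Type*} [AddCommGroup V] [Module ℂ V]
    (θ₁ θ₂ : ℝ) (ε : ℕ) (W : Submodule ℂ V) : ℝ :=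
  ((ε : ℝ) * θ₁ + θ₂ * (Module.finrank ℂ W : ℝ)) / ((ε : ℝ) + (Module.finrank ℂ W : ℝ))

/-- `(ε, W)` is a framed subrepresentation of `(V, A, B, C, v)`. -/
def IsFramedSubrep {V : Type*} [AddCommGroup V] [Module ℂ V]
    (A B C : V →ₗ[ℂ] V) {r : ℕ} (v : Fin r → V) (ε : ℕ) (W : Submodule ℂ V) : Prop :=
  ε ≤ 1 ∧ (∀ x ∈ W, A x ∈ W) ∧ (∀ x ∈ W, B x ∈ W) ∧ (∀ x ∈ W, C x ∈ W) ∧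
    (ε = 1 → ∀ i, v i ∈ W)

/-- `θ`-stability of the framed representation `(V, A, B, C, v)`: every framed
subrepresentation `(ε, W)` different from `(0, 0)` and from `(1, V)` has slope
strictly smaller than `μ(1, V)`. -/
def FramedStable {V : Type*} [AddCommGroup V] [Module ℂ V]
    (θ₁ θ₂ : ℝ) (A B C : V →ₗ[ℂ] V) {r : ℕ} (v : Fin r → V) : Prop :=
  ∀ (ε : ℕ) (W : Submodule ℂ V), IsFramedSubrep A B C v ε W →
    ¬(ε = 0 ∧ W = ⊥) → ¬(ε = 1 ∧ W = ⊤) →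
    framedSlope θ₁ θ₂ ε W < framedSlope θ₁ θ₂ 1 (⊤ : Submodule ℂ V)

/-- The vectors `v₁, …, v_r` jointly generate `V` under `A, B, C`: the only
invariant subspace containing all of them is `V` itself. -/
def JointlyGenerate {V : Type*} [AddCommGroup V] [Module ℂ V]
    (A B C : V →ₗ[ℂ] V) {r : ℕ} (v : Fin r → V) : Prop :=
  ∀ W : Submodule ℂ V, (∀ x ∈ W, A x ∈ W) → (∀ x ∈ W, B x ∈ W) → (∀ x ∈ W, C x ∈ W) →
    (∀ i, v i ∈ W) → W = ⊤

/-!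
Writing `μ(1, W) = θ₂ + (θ₁ - θ₂)/(1 + dim W)` and `μ(0, W) = θ₂` for `W ≠ 0`, the hypothesis
`θ₁ > θ₂` makes every `μ(0, W)` lie below every `μ(1, U)`, and makes `μ(1, W)` strictly
decreasing in `dim W`. So the subrepresentations `(0, W)` never destabilise, and `(1, W)`
destabilises exactly when `W` is a proper invariant subspace containing all `vᵢ`.
-/

section framedSlope

variable {V : Type*} [AddCommGroup V] [Module ℂ V] {θ₁ θ₂ : ℝ}

theorem framedSlope_one_eq (W : Submodule ℂ V) :
    framedSlope θ₁ θ₂ 1 W = θ₂ + (θ₁ - θ₂) / (1 + Module.finrank ℂ W) := by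
  rw [framedSlope, Nat.cast_one]
  field_simp
  ring

theorem framedSlope_zero_eq {W : Submodule ℂ V} (hW : Module.finrank ℂ W ≠ 0) :
    framedSlope θ₁ θ₂ 0 W = θ₂ := by
  have hW' : (Module.finrank ℂ W : ℝ) ≠ 0 := Nat.cast_ne_zero.mpr hW
  rw [framedSlope, Nat.cast_zero, zero_mul, zero_add, zero_add, mul_div_cancel_right₀ _ hW']

theorem framedSlope_zero_lt_framedSlope_one (hθ : θ₂ < θ₁) {W : Submodule ℂ V}
    (hW : Module.finrank ℂ W ≠ 0) (U : Submodule ℂ V) :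
    framedSlope θ₁ θ₂ 0 W < framedSlope θ₁ θ₂ 1 U := by
  rw [framedSlope_zero_eq hW, framedSlope_one_eq, lt_add_iff_pos_right]
  exact div_pos (sub_pos.mpr hθ) (by positivity)

theorem framedSlope_one_lt_framedSlope_one_iff (hθ : θ₂ < θ₁) (W U : Submodule ℂ V) :
    framedSlope θ₁ θ₂ 1 W < framedSlope θ₁ θ₂ 1 U ↔
      Module.finrank ℂ U < Module.finrank ℂ W := by
  rw [framedSlope_one_eq, framedSlope_one_eq, add_lt_add_iff_left,
    div_lt_div_iff_of_pos_left (sub_pos.mpr hθ) (by positivity) (by positivity)]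
  norm_cast
  exact Nat.add_lt_add_iff_left

end framedSlope

/-- **Proposition 2.4.** For `θ₁ > θ₂`, the framed representation
`(V, A, B, C, v₁, …, v_r)` is `θ`-stable if and only if the vectors
`v₁, …, v_r` jointly generate `V`. -/
theorem framedStable_iff_jointlyGenerate
    {V : Type*} [AddCommGroup V] [Module ℂ V] [FiniteDimensional ℂ V]
    (A B C : V →ₗ[ℂ] V) (r : ℕ) (v : Fin r → V)
    (θ₁ θ₂ : ℝ) (hθ : θ₁ > θ₂) :
    FramedStable θ₁ θ₂ A B C v ↔ JointlyGenerate A B C v := by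
  constructor
  · intro hstable W hA hB hC hv
    by_contra hW
    have hlt := hstable 1 W ⟨le_rfl, hA, hB, hC, fun _ => hv⟩ (by simp) (by simp [hW])
    rw [framedSlope_one_lt_framedSlope_one_iff hθ, finrank_top] at hlt
    exact hlt.not_ge (Submodule.finrank_le W)
  · rintro hgen ε W ⟨hε, hA, hB, hC, hv⟩ hne_zero hne_top
    interval_cases ε
    · have hW : W ≠ ⊥ := fun h => hne_zero ⟨rfl, h⟩
      exact framedSlope_zero_lt_framedSlope_one hθ (Submodule.finrank_eq_zero.not.mpr hW) ⊤
    · exact absurd ⟨rfl, hgen W hA hB hC (hv rfl)⟩ hne_top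
end

section
/- Let n and r be natural numbers and let f : (Matrix (Fin n) (Fin n) ℂ)³ × (Fin r → Fin n → ℂ) → ℂ be the map f(A, B, C, v₁, …, v_r) = trace(A·(B·C − C·B)). Then f is a critical point condition for exactly the commuting triples: the Fréchet derivative (over ℂ) of f vanishes at (A, B, C, v₁, …, v_r) if and only if A·B = B·A, B·C = C·B and A·C = C·A. In particular, the critical locus of the trace potential f = Tr(A[B,C]) on the space of framed representations is the set of commuting matrix triples together with arbitrary framing vectors. -/
/-!
The derivative of `Tr(A[B,C])` in the direction `(X, Y, Z, w)` is
`Tr(X[B,C]) + Tr(A[Y,C]) + Tr(A[B,Z])`, and invariance of the trace form,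
`Tr([P,Q]R) = Tr(P[Q,R])`, rewrites it as `Tr(X[B,C]) + Tr([C,A]Y) + Tr([A,B]Z)`.
Since the trace pairing on matrices is nondegenerate, this vanishes in every direction
exactly when the three commutators vanish.
-/

-- Any norm would do: in finite dimension `fderiv` does not depend on it.
attribute [local instance] Matrix.normedAddCommGroup Matrix.normedSpace

namespace Matrix

section Algebra

variable {R n : Type*} [CommRing R] [Fintype n]

theorem trace_lie_mul_eq (A B C : Matrix n n R) : trace (⁅A, B⁆ * C) = trace (A * ⁅B, C⁆) := by
  simp only [Ring.lie_def, sub_mul, mul_sub, trace_sub, Matrix.mul_assoc]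
  rw [trace_mul_comm B (A * C), Matrix.mul_assoc]

theorem forall_trace_mul_add_eq_zero_iff (P Q S : Matrix n n R) :
    (∀ X Y Z : Matrix n n R, trace (X * P) + trace (Q * Y) + trace (S * Z) = 0) ↔
      P = 0 ∧ Q = 0 ∧ S = 0 := by
  refine ⟨fun h => ⟨?_, ?_, ?_⟩, by rintro ⟨rfl, rfl, rfl⟩; simp⟩
  · exact ext_iff_trace_mul_left.2 fun X => by simpa using h X 0 0
  · exact ext_iff_trace_mul_right.2 fun Y => by simpa using h 0 Y 0
  · exact ext_iff_trace_mul_right.2 fun Z => by simpa using h 0 0 Z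

end Algebra

section Calculus

variable {𝕜 n : Type*} [NontriviallyNormedField 𝕜] [CompleteSpace 𝕜] [Fintype n]

noncomputable def mulCLM : Matrix n n 𝕜 →L[𝕜] Matrix n n 𝕜 →L[𝕜] Matrix n n 𝕜 :=
  LinearMap.toContinuousLinearMap
    (LinearMap.toContinuousLinearMap.toLinearMap ∘ₗ LinearMap.mul 𝕜 (Matrix n n 𝕜))

-- Not `mulCLM.flip`, whose codomain carries the topology of the norm rather than the
-- (propositionally equal) product topology of `Matrix`, which blocks adding derivatives.
noncomputable def mulRightCLM (Y : Matrix n n 𝕜) : Matrix n n 𝕜 →L[𝕜] Matrix n n 𝕜 :=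
  LinearMap.toContinuousLinearMap (LinearMap.mulRight 𝕜 Y)

noncomputable def traceCLM : Matrix n n 𝕜 →L[𝕜] 𝕜 :=
  LinearMap.toContinuousLinearMap (traceLinearMap n 𝕜 𝕜)

end Calculus

end Matrix

open Matrix

section

variable {𝕜 n E : Type*} [NontriviallyNormedField 𝕜] [CompleteSpace 𝕜] [Fintype n]
  [NormedAddCommGroup E] [NormedSpace 𝕜 E] {x : E}

theorem HasFDerivAt.matrix_mul {f g : E → Matrix n n 𝕜} {f' g' : E →L[𝕜] Matrix n n 𝕜}
    (hf : HasFDerivAt f f' x) (hg : HasFDerivAt g g' x) :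
    HasFDerivAt (fun y => f y * g y) ((mulCLM (f x)).comp g' + (mulRightCLM (g x)).comp f') x :=
  mulCLM.hasFDerivAt_of_bilinear hf hg

theorem HasFDerivAt.matrix_trace {f : E → Matrix n n 𝕜} {f' : E →L[𝕜] Matrix n n 𝕜}
    (hf : HasFDerivAt f f' x) : HasFDerivAt (fun y => trace (f y)) (traceCLM.comp f') x :=
  (traceCLM (n := n) (𝕜 := 𝕜)).hasFDerivAt.comp x hf

end

section

variable {𝕜 n V : Type*} [NontriviallyNormedField 𝕜] [CompleteSpace 𝕜] [Fintype n]
  [NormedAddCommGroup V] [NormedSpace 𝕜 V]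

variable (𝕜 n V) in
def tracePotential (p : Matrix n n 𝕜 × Matrix n n 𝕜 × Matrix n n 𝕜 × V) : 𝕜 :=
  trace (p.1 * ⁅p.2.1, p.2.2.1⁆)

theorem fderiv_tracePotential_apply (A B C : Matrix n n 𝕜) (v : V)
    (X Y Z : Matrix n n 𝕜) (w : V) :
    fderiv 𝕜 (tracePotential 𝕜 n V) (A, B, C, v) (X, Y, Z, w) =
      trace (X * ⁅B, C⁆) + trace (⁅C, A⁆ * Y) + trace (⁅A, B⁆ * Z) := by
  have hA := hasFDerivAt_fst (𝕜 := 𝕜) (p := (A, B, C, v))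
  have hB := (hasFDerivAt_snd (𝕜 := 𝕜) (p := (A, B, C, v))).fst
  have hC := (hasFDerivAt_snd (𝕜 := 𝕜) (p := (A, B, C, v))).snd.fst
  have hf : HasFDerivAt (tracePotential 𝕜 n V) _ (A, B, C, v) :=
    (hA.matrix_mul ((hB.matrix_mul hC).sub (hC.matrix_mul hB))).matrix_trace
  have hlie : B * Z + Y * C - (C * Y + Z * B) = ⁅Y, C⁆ + ⁅B, Z⁆ := by
    rw [Ring.lie_def, Ring.lie_def]; abel
  calc fderiv 𝕜 (tracePotential 𝕜 n V) (A, B, C, v) (X, Y, Z, w)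
      = trace (A * (B * Z + Y * C - (C * Y + Z * B)) + X * ⁅B, C⁆) := by
        rw [hf.fderiv]; rfl
    _ = trace (X * ⁅B, C⁆) + trace (⁅C, A⁆ * Y) + trace (⁅A, B⁆ * Z) := by
        rw [hlie, mul_add, trace_add, trace_add, trace_mul_comm A, trace_lie_mul_eq Y C A,
          ← trace_lie_mul_eq A B Z, trace_mul_comm Y]
        ring

theorem fderiv_tracePotential_eq_zero_iff (A B C : Matrix n n 𝕜) (v : V) :
    fderiv 𝕜 (tracePotential 𝕜 n V) (A, B, C, v) = 0 ↔
      ⁅B, C⁆ = 0 ∧ ⁅C, A⁆ = 0 ∧ ⁅A, B⁆ = 0 := by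
  rw [← forall_trace_mul_add_eq_zero_iff, ContinuousLinearMap.ext_iff]
  simp [fderiv_tracePotential_apply]

end

/-- The trace potential `f(A, B, C, v₁, …, v_r) = Tr(A·(B·C − C·B))` associated
to the superpotential `W = x[y,z]` on the `r`-framed three-loop quiver has
vanishing Fréchet derivative (over `ℂ`) at `(A, B, C, v)` if and only if the
three matrices pairwise commute: its critical locus is exactly the set of
commuting triples together with arbitrary framing vectors. -/
theorem fderiv_tracePotential_eq_zero_iff_commute (n r : ℕ)
    (A B C : Matrix (Fin n) (Fin n) ℂ) (v : Fin r → Fin n → ℂ) :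
    fderiv ℂ
        (fun p : Matrix (Fin n) (Fin n) ℂ × Matrix (Fin n) (Fin n) ℂ ×
            Matrix (Fin n) (Fin n) ℂ × (Fin r → Fin n → ℂ) =>
          Matrix.trace (p.1 * (p.2.1 * p.2.2.1 - p.2.2.1 * p.2.1)))
        (A, B, C, v) = 0 ↔
      (A * B = B * A ∧ B * C = C * B ∧ A * C = C * A) := by
  refine (fderiv_tracePotential_eq_zero_iff A B C v).trans ?_
  simp only [Ring.lie_def, sub_eq_zero]
  exact ⟨fun ⟨hBC, hCA, hAB⟩ => ⟨hAB, hBC, hCA.symm⟩,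
    fun ⟨hAB, hBC, hAC⟩ => ⟨hBC, hAC.symm, hAB⟩⟩
end
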